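/- arXiv:1706.05839 — 2 statements merged into one kernel-verified Lean document; each statement's English description precedes it below -/
import Mathlib

section
/- Define M(t) = δ·[A·P(t) + B·(1 − P(t))] + (1 − δ)·[Fγ·(μ·P(t) + (σ/√g)·f(t̃(t))) + Fα·(μ·(1 − P(t)) − (σ/√g)·f(t̃(t)))], where t̃(t) = (μ − t)√g/σ, P(t) = F(t̃(t)), σ > 0, g > 0, 0 < δ < 1, Fγ > Fα ≥ 0, and A, B, μ ∈ ℝ. Then M′(t₀) = 0 for t₀ = (δ/(1−δ))·(B − A)/(Fγ − Fα). -/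
/-!
Write `x = (μ - t) √g / σ`, so that `dx/dt = -√g / σ`. Since `φ' x = -x φ x` and
`(σ / √g) x = μ - t`, the truncated mean `μ P(t) + (σ / √g) φ(x)` has derivative `-(√g / σ) t φ(x)`,
while `P' (t) = -(√g / σ) φ(x)`. Hence
`M'(t) = -(√g / σ) φ(x) (δ (A - B) + (1 - δ) (Fγ - Fα) t)`, and the linear factor vanishes at `t₀`.
-/

open MeasureTheory ProbabilityTheory Set

noncomputable def stdPDF (x : ℝ) : ℝ := (Real.sqrt (2 * Real.pi))⁻¹ * Real.exp (-x ^ 2 / 2)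
noncomputable def stdCDF (x : ℝ) : ℝ := ∫ u in Set.Iic x, stdPDF u

lemma continuous_stdPDF : Continuous stdPDF := by
  unfold stdPDF; fun_prop

lemma integrable_stdPDF : Integrable stdPDF := by
  have h : stdPDF = fun x => (Real.sqrt (2 * Real.pi))⁻¹ * Real.exp (-(1 / 2 : ℝ) * x ^ 2) := by
    funext x; unfold stdPDF; ring_nf
  rw [h]
  exact (integrable_exp_neg_mul_sq (by norm_num)).const_mul _

lemma stdCDF_eq_add_intervalIntegral (y : ℝ) :
    stdCDF y = stdCDF 0 + ∫ u in (0 : ℝ)..y, stdPDF u := by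
  rw [← intervalIntegral.integral_Iic_sub_Iic integrable_stdPDF.integrableOn
    integrable_stdPDF.integrableOn]
  unfold stdCDF
  ring

lemma hasDerivAt_stdCDF (x : ℝ) : HasDerivAt stdCDF (stdPDF x) x := by
  rw [show stdCDF = _ from funext stdCDF_eq_add_intervalIntegral]
  exact (intervalIntegral.integral_hasDerivAt_right integrable_stdPDF.intervalIntegrable
    continuous_stdPDF.aestronglyMeasurable.stronglyMeasurableAtFilter
    continuous_stdPDF.continuousAt).const_add _

lemma hasDerivAt_stdPDF (x : ℝ) : HasDerivAt stdPDF (-x * stdPDF x) x := by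
  have hquad : HasDerivAt (fun y : ℝ => -y ^ 2 / 2) (-x) x := by
    simpa using ((hasDerivAt_pow 2 x).neg.div_const 2).congr_deriv (by ring)
  unfold stdPDF
  exact (hquad.exp.const_mul _).congr_deriv (by ring)

section Reparametrized

variable (μ k t : ℝ)

lemma hasDerivAt_stdCDF_sub_mul :
    HasDerivAt (fun s => stdCDF ((μ - s) * k)) (-k * stdPDF ((μ - t) * k)) t := by
  have hx : HasDerivAt (fun s => (μ - s) * k) (-k) t := by
    simpa using ((hasDerivAt_id t).const_sub μ).mul_const k
  exact ((hasDerivAt_stdCDF _).comp t hx).congr_deriv (by ring)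

lemma hasDerivAt_stdPDF_sub_mul :
    HasDerivAt (fun s => stdPDF ((μ - s) * k)) (k * ((μ - t) * k) * stdPDF ((μ - t) * k)) t := by
  have hx : HasDerivAt (fun s => (μ - s) * k) (-k) t := by
    simpa using ((hasDerivAt_id t).const_sub μ).mul_const k
  exact ((hasDerivAt_stdPDF _).comp t hx).congr_deriv (by ring)

/-- For `X ~ N(μ, k⁻²)` this function of `t` is `E[X; X > t]`, whose derivative is `-t` times the
density of `X` at `t`. -/
lemma hasDerivAt_truncatedMean (hk : k ≠ 0) :
    HasDerivAt (fun s => μ * stdCDF ((μ - s) * k) + k⁻¹ * stdPDF ((μ - s) * k))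
      (-k * t * stdPDF ((μ - t) * k)) t := by
  refine (((hasDerivAt_stdCDF_sub_mul μ k t).const_mul μ).add
    ((hasDerivAt_stdPDF_sub_mul μ k t).const_mul k⁻¹)).congr_deriv ?_
  field_simp
  ring

lemma hasDerivAt_expectedIncrement (δ Fγ Fα A B : ℝ) (hk : k ≠ 0) :
    HasDerivAt (fun s =>
      δ * (A * stdCDF ((μ - s) * k) + B * (1 - stdCDF ((μ - s) * k)))
      + (1 - δ) * (Fγ * (μ * stdCDF ((μ - s) * k) + k⁻¹ * stdPDF ((μ - s) * k))
                 + Fα * (μ * (1 - stdCDF ((μ - s) * k)) - k⁻¹ * stdPDF ((μ - s) * k))))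
      (-k * stdPDF ((μ - t) * k) * (δ * (A - B) + (1 - δ) * (Fγ - Fα) * t)) t := by
  have hP := hasDerivAt_stdCDF_sub_mul μ k t
  have hG := hasDerivAt_truncatedMean μ k t hk
  -- `μ (1 - P) - k⁻¹ φ = μ - G`, so both groups' terms are affine in `P` and the truncated mean `G`
  have hM := ((((hP.const_mul A).add ((hP.const_sub 1).const_mul B)).const_mul δ).add
    (((hG.const_mul Fγ).add ((hG.const_sub μ).const_mul Fα)).const_mul (1 - δ)))
  refine (hM.congr_of_eventuallyEq (.of_forall fun s => ?_)).congr_deriv ?_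
  · simp only [Pi.add_apply]
    ring
  · ring

end Reparametrized

theorem stmt4_general (μ σ g δ Fγ Fα A B : ℝ) (hσ : 0 < σ) (hg : 0 < g)
    (hδ1 : δ < 1) (hF : Fα < Fγ) :
    deriv (fun t : ℝ =>
      δ * (A * stdCDF ((μ - t) * Real.sqrt g / σ)
           + B * (1 - stdCDF ((μ - t) * Real.sqrt g / σ)))
      + (1 - δ) * (Fγ * (μ * stdCDF ((μ - t) * Real.sqrt g / σ)
                        + (σ / Real.sqrt g) * stdPDF ((μ - t) * Real.sqrt g / σ))
                 + Fα * (μ * (1 - stdCDF ((μ - t) * Real.sqrt g / σ))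
                        - (σ / Real.sqrt g) * stdPDF ((μ - t) * Real.sqrt g / σ))))
      ((δ / (1 - δ)) * (B - A) / (Fγ - Fα)) = 0 := by
  set t₀ := (δ / (1 - δ)) * (B - A) / (Fγ - Fα)
  have hk : Real.sqrt g / σ ≠ 0 := (div_pos (Real.sqrt_pos.mpr hg) hσ).ne'
  have hM := hasDerivAt_expectedIncrement μ _ t₀ δ Fγ Fα A B hk
  simp only [← mul_div_assoc, inv_div] at hM
  have hlinear : δ * (A - B) + (1 - δ) * (Fγ - Fα) * t₀ = 0 := by
    have : 1 - δ ≠ 0 := by linarith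
    have : Fγ - Fα ≠ 0 := by linarith
    simp only [t₀]
    field_simp
    ring
  rw [hM.deriv, hlinear, mul_zero]

theorem stmt4 (μ σ g δ Fγ Fα A B : ℝ) (hσ : 0 < σ) (hg : 0 < g)
    (hδ0 : 0 < δ) (hδ1 : δ < 1) (hF : Fα < Fγ) (hFα : 0 ≤ Fα) :
    deriv (fun t : ℝ =>
      δ * (A * stdCDF ((μ - t) * Real.sqrt g / σ)
           + B * (1 - stdCDF ((μ - t) * Real.sqrt g / σ)))
      + (1 - δ) * (Fγ * (μ * stdCDF ((μ - t) * Real.sqrt g / σ)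
                        + (σ / Real.sqrt g) * stdPDF ((μ - t) * Real.sqrt g / σ))
                 + Fα * (μ * (1 - stdCDF ((μ - t) * Real.sqrt g / σ))
                        - (σ / Real.sqrt g) * stdPDF ((μ - t) * Real.sqrt g / σ))))
      ((δ / (1 - δ)) * (B - A) / (Fγ - Fα)) = 0 :=
  stmt4_general μ σ g δ Fγ Fα A B hσ hg hδ1 hF
end

section
/- Let M_G(t) = Fγ·(μ·P(t) + c·f(t̃(t))) + Fα·(μ·(1 − P(t)) − c·f(t̃(t))) with P(t) = F(t̃(t)), t̃(t) = (μ − t)√g/σ, c = σ/√g > 0, Fγ > Fα ≥ 0. Then M_G′(t) = −(Fγ − Fα)·(√g/σ)·t·f(t̃(t)). Hence M_G′(0) = 0, M_G′(t) > 0 for t < 0, M_G′(t) < 0 for t > 0, so t = 0 is the unique global maximum of M_G. -/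
open MeasureTheory ProbabilityTheory Set

lemma stdPDF_pos (x : ℝ) : 0 < stdPDF x := by
  unfold stdPDF
  positivity

theorem stmt15 (μ σ g Fγ Fα : ℝ) (hσ : 0 < σ) (hg : 0 < g)
    (hF : Fα < Fγ) (hFα : 0 ≤ Fα) :
    let MG : ℝ → ℝ := fun t =>
      Fγ * (μ * stdCDF ((μ - t) * Real.sqrt g / σ)
            + (σ / Real.sqrt g) * stdPDF ((μ - t) * Real.sqrt g / σ))
      + Fα * (μ * (1 - stdCDF ((μ - t) * Real.sqrt g / σ))
            - (σ / Real.sqrt g) * stdPDF ((μ - t) * Real.sqrt g / σ))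
    (∀ t : ℝ, deriv MG t
        = -((Fγ - Fα) * (Real.sqrt g / σ) * t * stdPDF ((μ - t) * Real.sqrt g / σ))) ∧
    deriv MG 0 = 0 ∧
    (∀ t : ℝ, t < 0 → 0 < deriv MG t) ∧
    (∀ t : ℝ, 0 < t → deriv MG t < 0) ∧
    (∀ t : ℝ, t ≠ 0 → MG t < MG 0) := by
  intro MG
  have hs : 0 < Real.sqrt g := Real.sqrt_pos.2 hg
  have hsne : Real.sqrt g ≠ 0 := ne_of_gt hs
  have hσne : σ ≠ 0 := ne_of_gt hσ
  have hu : ∀ t : ℝ, HasDerivAt (fun t => (μ - t) * Real.sqrt g / σ)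
      (-(Real.sqrt g / σ)) t := by
    intro t
    have h := (((hasDerivAt_id t).const_sub μ).mul_const (Real.sqrt g)).div_const σ
    refine h.congr_deriv ?_
    ring
  have key : ∀ t : ℝ, HasDerivAt MG
      (-((Fγ - Fα) * (Real.sqrt g / σ) * t * stdPDF ((μ - t) * Real.sqrt g / σ))) t := by
    intro t
    have h1 := (hasDerivAt_stdCDF ((μ - t) * Real.sqrt g / σ)).comp t (hu t)
    have h2 := (hasDerivAt_stdPDF ((μ - t) * Real.sqrt g / σ)).comp t (hu t)
    have h3 := ((h1.const_mul μ).add (h2.const_mul (σ / Real.sqrt g))).const_mul Fγ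
    have h4 := (((h1.const_sub 1).const_mul μ).sub
      (h2.const_mul (σ / Real.sqrt g))).const_mul Fα
    have h5 := h3.add h4
    refine h5.congr_deriv ?_
    field_simp
    ring
  have hder : ∀ t : ℝ, deriv MG t
      = -((Fγ - Fα) * (Real.sqrt g / σ) * t * stdPDF ((μ - t) * Real.sqrt g / σ)) :=
    fun t => (key t).deriv
  have hC : 0 < (Fγ - Fα) * (Real.sqrt g / σ) :=
    mul_pos (sub_pos.2 hF) (div_pos hs hσ)
  have hpos : ∀ t : ℝ, t < 0 → 0 < deriv MG t := by
    intro t ht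
    rw [hder t]
    nlinarith [mul_pos hC (stdPDF_pos ((μ - t) * Real.sqrt g / σ))]
  have hneg : ∀ t : ℝ, 0 < t → deriv MG t < 0 := by
    intro t ht
    rw [hder t]
    nlinarith [mul_pos hC (stdPDF_pos ((μ - t) * Real.sqrt g / σ))]
  refine ⟨hder, by rw [hder 0]; ring, hpos, hneg, ?_⟩
  have hdiff : Differentiable ℝ MG := fun t => (key t).differentiableAt
  have hcont : Continuous MG := hdiff.continuous
  have mono : StrictMonoOn MG (Set.Iic 0) :=
    strictMonoOn_of_deriv_pos (convex_Iic 0) hcont.continuousOn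
      (by intro x hx; rw [interior_Iic] at hx; exact hpos x hx)
  have anti : StrictAntiOn MG (Set.Ici 0) :=
    strictAntiOn_of_deriv_neg (convex_Ici 0) hcont.continuousOn
      (by intro x hx; rw [interior_Ici] at hx; exact hneg x hx)
  intro t ht
  rcases ht.lt_or_gt with h | h
  · exact mono (Set.mem_Iic.2 h.le) (Set.mem_Iic.2 le_rfl) h
  · exact anti (Set.mem_Ici.2 le_rfl) (Set.mem_Ici.2 h.le) h
end
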